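/- Let X⁻ ∈ ℝ^{(n-1)×d} be a data matrix with rows xᵢᵀ, D_w a diagonal matrix with entries ℓ''(wᵀxᵢ, yᵢ), H_w = (X⁻)ᵀ D_w X⁻ + λ(n-1)I, and suppose ℓ'' is γ-Lipschitz and ‖xᵢ‖₂ ≤ 1. Then for the Newton update w⁻ = w* + H_{w*}^{-1}Δ, the gradient residual satisfies ‖∇L(w⁻; D')‖₂ ≤ γ ‖X⁻‖₂ · ‖H_{w*}^{-1}Δ‖₂ · ‖X⁻ H_{w*}^{-1}Δ‖₂. -/

import Mathlib

open scoped RealInnerProductSpace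

/-!
At the minimiser `w*` of the full objective the leave-one-out gradient equals `-Δ`, and the Newton
step `u = H⁻¹Δ` satisfies `H u = Δ`; hence `∇L(w⁻; D')` is exactly the second-order Taylor
remainder `∇L(w* + u) - ∇L(w*) - H u` of the leave-one-out gradient. By the mean value inequality
it is bounded by the supremum over `t ∈ [0, 1]` of `‖(∇²L(w* + t u) - ∇²L(w*)) u‖ = ‖(X⁻)ᵀ c‖` with
`cᵢ = (ℓ''(xᵢᵀ(w* + t u)) - ℓ''(xᵢᵀw*)) xᵢᵀu`, and `|cᵢ| ≤ γ ‖u‖ |(X⁻u)ᵢ|` because `ℓ''` is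
`γ`-Lipschitz and `‖xᵢ‖ ≤ 1`.
-/

lemma EuclideanSpace.norm_le_of_forall_norm_apply_le {𝕜 ι : Type*} [RCLike 𝕜] [Fintype ι]
    {c b : EuclideanSpace 𝕜 ι} (h : ∀ i, ‖c i‖ ≤ ‖b i‖) : ‖c‖ ≤ ‖b‖ := by
  rw [EuclideanSpace.norm_eq, EuclideanSpace.norm_eq]
  gcongr with i
  exact h i

section

variable {ι E : Type*} [Fintype ι] [NormedAddCommGroup E] [InnerProductSpace ℝ E]

lemma adjoint_apply_eq_sum_smul [CompleteSpace E] {v : ι → E}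
    {X : E →L[ℝ] EuclideanSpace ℝ ι} (hX : ∀ w i, X w i = ⟪v i, w⟫) (c : EuclideanSpace ℝ ι) :
    X.adjoint c = ∑ i, c i • v i := by
  refine ext_inner_right ℝ fun w => ?_
  simp only [ContinuousLinearMap.adjoint_inner_left, sum_inner, real_inner_smul_left,
    PiLp.inner_apply, hX, RCLike.inner_apply, conj_trivial, mul_comm]

lemma norm_sum_smul_le_opNorm_mul_norm [CompleteSpace E] {v : ι → E}
    {X : E →L[ℝ] EuclideanSpace ℝ ι} (hX : ∀ w i, X w i = ⟪v i, w⟫) (c : EuclideanSpace ℝ ι) :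
    ‖∑ i, c i • v i‖ ≤ ‖X‖ * ‖c‖ := by
  rw [← adjoint_apply_eq_sum_smul hX, ← ContinuousLinearMap.adjoint.norm_map X]
  exact X.adjoint.le_opNorm c

lemma LipschitzWith.abs_sub_inner_add_smul_le {g : ℝ → ℝ} {γ : NNReal} (hg : LipschitzWith γ g)
    {v : E} (hv : ‖v‖ ≤ 1) (w u : E) {t : ℝ} (ht : |t| ≤ 1) :
    |g ⟪v, w + t • u⟫ - g ⟪v, w⟫| ≤ γ * ‖u‖ := by
  have hinner : |⟪v, w + t • u⟫ - ⟪v, w⟫| ≤ ‖u‖ :=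
    calc |⟪v, w + t • u⟫ - ⟪v, w⟫| = |t| * |⟪v, u⟫| := by
          rw [inner_add_right, real_inner_smul_right, add_sub_cancel_left, abs_mul]
      _ ≤ 1 * (‖v‖ * ‖u‖) := by gcongr; exact abs_real_inner_le_norm v u
      _ ≤ ‖u‖ := by rw [one_mul]; exact mul_le_of_le_one_left (norm_nonneg u) hv
  simpa only [← Real.dist_eq] using (hg.dist_le_mul _ _).trans (by rw [Real.dist_eq]; gcongr)

lemma norm_sub_sub_deriv_le {F : Type*} [NormedAddCommGroup F] [NormedSpace ℝ F] {f f' : ℝ → F}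
    {M : ℝ} (hf : ∀ t ∈ Set.Icc (0 : ℝ) 1, HasDerivAt f (f' t) t)
    (hM : ∀ t ∈ Set.Ico (0 : ℝ) 1, ‖f' t - f' 0‖ ≤ M) :
    ‖f 1 - f 0 - f' 0‖ ≤ M := by
  have hg : ∀ t ∈ Set.Icc (0 : ℝ) 1,
      HasDerivWithinAt (fun t => f t - t • f' 0) (f' t - f' 0) (Set.Icc 0 1) t := fun t ht =>
    ((hf t ht).sub (by simpa using (hasDerivAt_id t).smul_const (f' 0))).hasDerivWithinAt
  simpa [sub_right_comm] using norm_image_sub_le_of_norm_deriv_le_segment' hg hM 1 (by simp)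

variable (ℓ ℓ' ℓ'' : ℝ → ℝ → ℝ) (x : ι → E) (y : ι → ℝ) (μ : ℝ)

noncomputable section

/- `ridgeHess` is the paper's `H_w = Xᵀ D_w X + μ I`; the regularisation weight `μ` stands for `λ`
times the number of data points. -/
def ridgeLoss (w : E) : ℝ := ∑ i, ℓ ⟪x i, w⟫ (y i) + μ / 2 * ‖w‖ ^ 2

def ridgeGrad (w : E) : E := ∑ i, ℓ' ⟪x i, w⟫ (y i) • x i + μ • w

def ridgeHess (w : E) : E →L[ℝ] E :=
  ∑ i, ℓ'' ⟪x i, w⟫ (y i) • (innerSL ℝ (x i)).smulRight (x i) + μ • ContinuousLinearMap.id ℝ E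

end

variable {ℓ ℓ' ℓ'' x y μ}

lemma ridgeHess_apply (w u : E) :
    ridgeHess ℓ'' x y μ w u = ∑ i, (ℓ'' ⟪x i, w⟫ (y i) * ⟪x i, u⟫) • x i + μ • u := by
  simp [ridgeHess, smul_smul]

lemma ridgeHess_apply_sub_ridgeHess_apply (w w' u : E) :
    ridgeHess ℓ'' x y μ w' u - ridgeHess ℓ'' x y μ w u =
      ∑ i, ((ℓ'' ⟪x i, w'⟫ (y i) - ℓ'' ⟪x i, w⟫ (y i)) * ⟪x i, u⟫) • x i := by
  simp only [ridgeHess_apply, sub_mul, sub_smul, Finset.sum_sub_distrib]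
  abel

lemma hasFDerivAt_ridgeLoss (hℓ : ∀ y z, HasDerivAt (fun t => ℓ t y) (ℓ' z y) z) (w : E) :
    HasFDerivAt (ridgeLoss ℓ x y μ) (innerSL ℝ (ridgeGrad ℓ' x y μ w)) w := by
  have hsum := HasFDerivAt.fun_sum (u := Finset.univ) fun i _ =>
    (hℓ (y i) ⟪x i, w⟫).comp_hasFDerivAt w (innerSL ℝ (x i)).hasFDerivAt
  refine (hsum.add ((hasStrictFDerivAt_norm_sq w).hasFDerivAt.const_mul (μ / 2))).congr_fderiv ?_
  ext v
  simp only [ridgeGrad, add_apply, sum_apply, smul_apply, coe_innerSL_apply, map_add, map_sum,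
    map_smul, smul_eq_mul, nsmul_eq_mul, Nat.cast_ofNat, real_inner_comm, add_right_inj]
  ring

lemma IsLocalMin.ridgeGrad_eq_zero (hℓ : ∀ y z, HasDerivAt (fun t => ℓ t y) (ℓ' z y) z) {w : E}
    (hmin : IsLocalMin (ridgeLoss ℓ x y μ) w) : ridgeGrad ℓ' x y μ w = 0 := by
  have := hmin.hasFDerivAt_eq_zero (hasFDerivAt_ridgeLoss hℓ w)
  simpa using congrArg norm this

lemma hasFDerivAt_ridgeGrad (hℓ' : ∀ y z, HasDerivAt (fun t => ℓ' t y) (ℓ'' z y) z) (w : E) :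
    HasFDerivAt (ridgeGrad ℓ' x y μ) (ridgeHess ℓ'' x y μ w) w := by
  have hsum := HasFDerivAt.fun_sum (u := Finset.univ) fun i _ =>
    ((hℓ' (y i) ⟪x i, w⟫).comp_hasFDerivAt w (innerSL ℝ (x i)).hasFDerivAt).smul_const (x i)
  refine (hsum.add ((hasFDerivAt_id w).const_smul μ)).congr_fderiv ?_
  ext u
  simp [ridgeHess_apply]

lemma ridgeGrad_fin_succ {n : ℕ} {x : Fin (n + 1) → E} {y : Fin (n + 1) → ℝ} (μ ν : ℝ) (w : E) :
    ridgeGrad ℓ' x y (μ + ν) w =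
      ridgeGrad ℓ' (fun i : Fin n => x i.castSucc) (fun i : Fin n => y i.castSucc) μ w
      + (ν • w + ℓ' ⟪x (Fin.last n), w⟫ (y (Fin.last n)) • x (Fin.last n)) := by
  simp only [ridgeGrad, Fin.sum_univ_castSucc, add_smul]
  abel

lemma norm_ridgeGrad_add_sub_sub_le [CompleteSpace E]
    (hℓ' : ∀ y z, HasDerivAt (fun t => ℓ' t y) (ℓ'' z y) z) {γ : NNReal}
    (hlip : ∀ y, LipschitzWith γ (fun z => ℓ'' z y)) (hx : ∀ i, ‖x i‖ ≤ 1)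
    {X : E →L[ℝ] EuclideanSpace ℝ ι} (hX : ∀ w i, X w i = ⟪x i, w⟫) (w u : E) :
    ‖ridgeGrad ℓ' x y μ (w + u) - ridgeGrad ℓ' x y μ w - ridgeHess ℓ'' x y μ w u‖
      ≤ γ * ‖X‖ * ‖u‖ * ‖X u‖ := by
  have hline : ∀ t : ℝ, HasDerivAt (fun s : ℝ => ridgeGrad ℓ' x y μ (w + s • u))
      (ridgeHess ℓ'' x y μ (w + t • u) u) t := fun t => by
    simpa [Function.comp_def] using (hasFDerivAt_ridgeGrad hℓ' (w + t • u)).comp_hasDerivAt t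
      (((hasDerivAt_id t).smul_const u).const_add w)
  have hcurv : ∀ t ∈ Set.Ico (0 : ℝ) 1,
      ‖ridgeHess ℓ'' x y μ (w + t • u) u - ridgeHess ℓ'' x y μ (w + (0 : ℝ) • u) u‖
        ≤ γ * ‖X‖ * ‖u‖ * ‖X u‖ := by
    intro t ht
    rw [zero_smul, add_zero, ridgeHess_apply_sub_ridgeHess_apply]
    set c : EuclideanSpace ℝ ι := WithLp.toLp 2 fun i =>
      (ℓ'' ⟪x i, w + t • u⟫ (y i) - ℓ'' ⟪x i, w⟫ (y i)) * ⟪x i, u⟫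
    have hc : ‖c‖ ≤ ‖(γ * ‖u‖) • X u‖ := EuclideanSpace.norm_le_of_forall_norm_apply_le fun i => by
      simp only [c, PiLp.smul_apply, hX, norm_mul, Real.norm_eq_abs, smul_eq_mul, NNReal.abs_eq,
        abs_norm]
      gcongr
      exact (hlip (y i)).abs_sub_inner_add_smul_le (hx i) w u
        (abs_le.2 ⟨by linarith [ht.1], ht.2.le⟩)
    calc _ = ‖∑ i, c i • x i‖ := rfl
      _ ≤ ‖X‖ * ‖c‖ := norm_sum_smul_le_opNorm_mul_norm hX c
      _ ≤ ‖X‖ * ‖(γ * ‖u‖) • X u‖ := by gcongr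
      _ = γ * ‖X‖ * ‖u‖ * ‖X u‖ := by
        rw [norm_smul, Real.norm_of_nonneg (by positivity)]
        ring
  simpa using norm_sub_sub_deriv_le (fun t _ => hline t) hcurv

end

theorem data_dependent_residual_bound_general {d n : ℕ}
    (lam : ℝ) (γ : NNReal)
    (ℓ : ℝ → ℝ → ℝ) (ℓ' : ℝ → ℝ → ℝ) (ℓ'' : ℝ → ℝ → ℝ)
    (hderiv : ∀ y z, HasDerivAt (fun t => ℓ t y) (ℓ' z y) z)
    (hderiv2 : ∀ y z, HasDerivAt (fun t => ℓ' t y) (ℓ'' z y) z)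
    (hlip : ∀ y, LipschitzWith γ (fun z => ℓ'' z y))
    (x : Fin (n + 1) → EuclideanSpace ℝ (Fin d)) (y : Fin (n + 1) → ℝ)
    (hx : ∀ i, ‖x i‖ ≤ 1)
    (L : EuclideanSpace ℝ (Fin d) → ℝ)
    (hL : ∀ w, L w = ∑ i, ℓ ⟪x i, w⟫ (y i) + lam * (n + 1) / 2 * ‖w‖ ^ 2)
    (wstar : EuclideanSpace ℝ (Fin d))
    (hmin : IsMinOn L Set.univ wstar)
    (Δ : EuclideanSpace ℝ (Fin d))
    (hΔ : Δ = lam • wstar +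
      ℓ' ⟪x (Fin.last n), wstar⟫ (y (Fin.last n)) • x (Fin.last n))
    -- the Hessian of the leave-one-out loss `L(·; D')` at `w*`:
    (H : EuclideanSpace ℝ (Fin d) →L[ℝ] EuclideanSpace ℝ (Fin d))
    (hH : H = (∑ i : Fin n,
        ℓ'' ⟪x i.castSucc, wstar⟫ (y i.castSucc) •
          ((innerSL ℝ (x i.castSucc)).smulRight (x i.castSucc)))
      + (lam * n) • ContinuousLinearMap.id ℝ _)
    (Hinv : EuclideanSpace ℝ (Fin d) →L[ℝ] EuclideanSpace ℝ (Fin d))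
    (hinv₁ : H.comp Hinv = ContinuousLinearMap.id ℝ _)
    (wminus : EuclideanSpace ℝ (Fin d)) (hwminus : wminus = wstar + Hinv Δ)
    -- the gradient of the leave-one-out loss `L(·; D')`:
    (gradL' : EuclideanSpace ℝ (Fin d) → EuclideanSpace ℝ (Fin d))
    (hgradL' : ∀ w, gradL' w = (∑ i : Fin n,
        ℓ' ⟪x i.castSucc, w⟫ (y i.castSucc) • x i.castSucc) + (lam * n) • w)
    -- the leave-one-out data matrix `X⁻`, viewed as an operator with rows `xᵢᵀ`:
    (X : EuclideanSpace ℝ (Fin d) →L[ℝ] EuclideanSpace ℝ (Fin n))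
    (hX : ∀ (w : EuclideanSpace ℝ (Fin d)) (i : Fin n), X w i = ⟪x i.castSucc, w⟫) :
    ‖gradL' wminus‖ ≤ (γ : ℝ) * ‖X‖ * ‖Hinv Δ‖ * ‖X (Hinv Δ)‖ := by
  have hgrad : gradL' =
      ridgeGrad ℓ' (fun i : Fin n => x i.castSucc) (fun i => y i.castSucc) (lam * n) :=
    funext hgradL'
  have hstat : gradL' wstar = -Δ := by
    have hloss : L = ridgeLoss ℓ x y (lam * (n + 1)) := funext hL
    have hcrit := (hloss ▸ hmin.isLocalMin Filter.univ_mem).ridgeGrad_eq_zero hderiv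
    rw [mul_add_one, ridgeGrad_fin_succ, ← hgrad, ← hΔ] at hcrit
    exact eq_neg_of_add_eq_zero_left hcrit
  have hhess : ridgeHess ℓ'' (fun i : Fin n => x i.castSucc) (fun i => y i.castSucc) (lam * n)
      wstar = H := hH.symm
  have hnewton : H (Hinv Δ) = Δ := by simpa using DFunLike.congr_fun hinv₁ Δ
  have htaylor := norm_ridgeGrad_add_sub_sub_le (x := fun i : Fin n => x i.castSucc)
    (y := fun i => y i.castSucc) (μ := lam * n) hderiv2 hlip (fun i => hx i.castSucc) hX
    wstar (Hinv Δ)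
  rwa [← hgrad, hhess, hnewton, hstat, sub_neg_eq_add, add_sub_cancel_right, ← hwminus]
    at htaylor

/-- Corollary 1 (data-dependent gradient residual bound): with `X⁻` the
leave-one-out data matrix (as an operator, with rows `xᵢᵀ`), the Newton update
`w⁻ = w* + H⁻¹Δ` has leave-one-out gradient residual norm at most
`γ ‖X⁻‖ ‖H⁻¹Δ‖ ‖X⁻ H⁻¹Δ‖` (spectral norm on operators). -/
theorem data_dependent_residual_bound {d n : ℕ} (hn : 0 < n)
    (lam C : ℝ) (hlam : 0 < lam) (γ : NNReal)
    (ℓ : ℝ → ℝ → ℝ) (ℓ' : ℝ → ℝ → ℝ) (ℓ'' : ℝ → ℝ → ℝ)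
    (hderiv : ∀ y z, HasDerivAt (fun t => ℓ t y) (ℓ' z y) z)
    (hderiv2 : ∀ y z, HasDerivAt (fun t => ℓ' t y) (ℓ'' z y) z)
    (hlip : ∀ y, LipschitzWith γ (fun z => ℓ'' z y))
    (x : Fin (n + 1) → EuclideanSpace ℝ (Fin d)) (y : Fin (n + 1) → ℝ)
    (hx : ∀ i, ‖x i‖ ≤ 1)
    (hgrad : ∀ i (w : EuclideanSpace ℝ (Fin d)), ‖ℓ' ⟪x i, w⟫ (y i) • x i‖ ≤ C)
    (L : EuclideanSpace ℝ (Fin d) → ℝ)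
    (hL : ∀ w, L w = ∑ i, ℓ ⟪x i, w⟫ (y i) + lam * (n + 1) / 2 * ‖w‖ ^ 2)
    (wstar : EuclideanSpace ℝ (Fin d))
    (hmin : IsMinOn L Set.univ wstar)
    (Δ : EuclideanSpace ℝ (Fin d))
    (hΔ : Δ = lam • wstar +
      ℓ' ⟪x (Fin.last n), wstar⟫ (y (Fin.last n)) • x (Fin.last n))
    -- the Hessian of the leave-one-out loss `L(·; D')` at `w*`:
    (H : EuclideanSpace ℝ (Fin d) →L[ℝ] EuclideanSpace ℝ (Fin d))
    (hH : H = (∑ i : Fin n,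
        ℓ'' ⟪x i.castSucc, wstar⟫ (y i.castSucc) •
          ((innerSL ℝ (x i.castSucc)).smulRight (x i.castSucc)))
      + (lam * n) • ContinuousLinearMap.id ℝ _)
    (Hinv : EuclideanSpace ℝ (Fin d) →L[ℝ] EuclideanSpace ℝ (Fin d))
    (hinv₁ : H.comp Hinv = ContinuousLinearMap.id ℝ _)
    (hinv₂ : Hinv.comp H = ContinuousLinearMap.id ℝ _)
    (wminus : EuclideanSpace ℝ (Fin d)) (hwminus : wminus = wstar + Hinv Δ)
    -- the gradient of the leave-one-out loss `L(·; D')`: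
    (gradL' : EuclideanSpace ℝ (Fin d) → EuclideanSpace ℝ (Fin d))
    (hgradL' : ∀ w, gradL' w = (∑ i : Fin n,
        ℓ' ⟪x i.castSucc, w⟫ (y i.castSucc) • x i.castSucc) + (lam * n) • w)
    -- the leave-one-out data matrix `X⁻`, viewed as an operator with rows `xᵢᵀ`:
    (X : EuclideanSpace ℝ (Fin d) →L[ℝ] EuclideanSpace ℝ (Fin n))
    (hX : ∀ (w : EuclideanSpace ℝ (Fin d)) (i : Fin n), X w i = ⟪x i.castSucc, w⟫) :
    ‖gradL' wminus‖ ≤ (γ : ℝ) * ‖X‖ * ‖Hinv Δ‖ * ‖X (Hinv Δ)‖ :=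
  data_dependent_residual_bound_general lam γ ℓ ℓ' ℓ'' hderiv hderiv2 hlip x y hx L hL wstar hmin Δ
    hΔ H hH Hinv hinv₁ wminus hwminus gradL' hgradL' X hX
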